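/- Let r ≥ 1 and let (v_1,…,v_r) be a system of linear functionals on ℂ[x] with moment matrix M, and let n ∈ ℕ be such that Δ_n ≠ 0 and Δ_{n+1} ≠ 0, where Δ_m is the determinant of the m×m leading principal submatrix of M (Δ_0 := 1). If q_n is a type I linear form on the step-line for the index n with respect to (v_1,…,v_r), then its leading coefficient satisfies lc(q_n) = Δ_n / Δ_{n+1}. -/

import Mathlib

/-!
Listing the coefficients of the `A_j` along the step line (the coefficient of `x^s` in `A_j`
at position `r s + j`) gives a vector `a` of length `n + 1` with `M_{n+1} a = e_n`, where
`M_{n+1}` is the leading `(n+1) × (n+1)` section of the moment matrix: orthogonality gives the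
first `n` rows, the normalisation the last one. The leading coefficient is the last entry `a_n`,
so Cramer's rule gives `Δ_{n+1} a_n = adj(M_{n+1})_{n,n} = Δ_n`.
-/

open Polynomial Finset

noncomputable section

/-- A linear functional on `ℂ[x]`. -/
abbrev LF := Polynomial ℂ →ₗ[ℂ] ℂ

/-- The moment matrix of a system of `r` linear functionals (0-indexed:
`v j` is the paper's `v_{j+1}`): entry `(n, r*k+j)` is `⟨v_{j+1}, x^{k+n}⟩`. -/
def momentMatrix (r : ℕ) (v : ℕ → LF) (n ℓ : ℕ) : ℂ :=
  v (ℓ % r) (Polynomial.X ^ (ℓ / r + n))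

/-- `Δ_m`: determinant of the `m × m` leading principal submatrix of the
moment matrix of `v` (`Δ_0 = 1`). -/
def Delta (r : ℕ) (v : ℕ → LF) (m : ℕ) : ℂ :=
  Matrix.det (Matrix.of fun i j : Fin m => momentMatrix r v i j)

theorem Matrix.det_mul_last_eq_det_submatrix_castSucc {R : Type*} [CommRing R] {n : ℕ}
    (A : Matrix (Fin (n + 1)) (Fin (n + 1)) R) {a : Fin (n + 1) → R}
    (h : A.mulVec a = Pi.single (Fin.last n) 1) :
    A.det * a (Fin.last n) = (A.submatrix Fin.castSucc Fin.castSucc).det := by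
  have cramer := congrFun (congrArg A.adjugate.mulVec h) (Fin.last n)
  simp only [mulVec_mulVec, adjugate_mul, smul_mulVec, one_mulVec, mulVec_single_one,
    Pi.smul_apply, smul_eq_mul, col_apply, adjugate_fin_succ_eq_det_submatrix,
    Fin.succAbove_last] at cramer
  rw [cramer, ← two_mul, pow_mul, neg_one_sq, one_pow, one_mul]

theorem LinearMap.apply_mul_X_pow_eq_sum {R M : Type*} [CommSemiring R] [AddCommMonoid M]
    [Module R M] (f : R[X] →ₗ[R] M) {p : R[X]} {N : ℕ} (hp : p.natDegree < N) (ℓ : ℕ) :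
    f (p * X ^ ℓ) = ∑ s ∈ Finset.range N, p.coeff s • f (X ^ (s + ℓ)) := by
  conv_lhs => rw [p.as_sum_range' N hp]
  rw [Finset.sum_mul, map_sum]
  refine Finset.sum_congr rfl fun s _ => ?_
  rw [← C_mul_X_pow_eq_monomial, mul_assoc, ← pow_add, ← smul_eq_C_mul, map_smul]

theorem sum_apply_mul_X_pow_eq_sum_momentMatrix {r N : ℕ} (hr : 0 < r) (v : ℕ → LF)
    {Ap : ℕ → ℂ[X]} (hAp : ∀ j < r, ∀ s, N ≤ r * s + j → (Ap j).coeff s = 0) (ℓ : ℕ) :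
    ∑ j ∈ range r, v j (Ap j * X ^ ℓ) =
      ∑ c ∈ range N, momentMatrix r v ℓ c * (Ap (c % r)).coeff (c / r) := by
  have hdeg : ∀ j ∈ range r, (Ap j).natDegree < N + 1 := fun j hj =>
    Nat.lt_succ_of_le <| natDegree_le_iff_coeff_eq_zero.2 fun s hs =>
      hAp j (mem_range.1 hj) s (by nlinarith)
  rw [sum_congr rfl fun j hj => (v j).apply_mul_X_pow_eq_sum (hdeg j hj) ℓ, ← sum_product']
  symm
  refine sum_of_injOn (fun c => (c % r, c / r)) ?_ ?_ ?_ ?_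
  · intro c _ d _ hcd
    obtain ⟨hmod, hdiv⟩ := Prod.mk.inj hcd
    rw [← Nat.div_add_mod c r, ← Nat.div_add_mod d r, hmod, hdiv]
  · intro c hc
    simp only [mem_coe, mem_product, mem_range] at hc ⊢
    exact ⟨Nat.mod_lt c hr, (Nat.div_le_self c r).trans_lt (by omega)⟩
  · rintro ⟨j, s⟩ hjs himg
    simp only [mem_product, mem_range] at hjs
    have hN : N ≤ r * s + j := by
      by_contra! hlt
      refine himg ⟨r * s + j, by simpa using hlt, ?_⟩
      simp [Nat.mod_eq_of_lt hjs.1, Nat.mul_add_div hr, Nat.div_eq_of_lt hjs.1]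
    simp [hAp j hjs.1 s hN]
  · intro c _
    simp only [momentMatrix, smul_eq_mul, mul_comm]

theorem coeff_eq_zero_of_stepLine {r m k : ℕ} {Ap : ℕ → ℂ[X]}
    (hdeg1 : ∀ j, j ≤ k → (Ap j).degree ≤ (m : WithBot ℕ))
    (hdeg2 : ∀ j, k < j → j < r → (Ap j).degree < (m : WithBot ℕ)) :
    ∀ j < r, ∀ s, r * m + k + 1 ≤ r * s + j → (Ap j).coeff s = 0 := by
  intro j hj s hs
  apply coeff_eq_zero_of_degree_lt
  rcases le_or_gt j k with hjk | hjk
  · have hms : m < s := by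
      by_contra! hsm
      have := Nat.mul_le_mul_left r hsm
      omega
    exact (hdeg1 j hjk).trans_lt (by exact_mod_cast hms)
  · have hms : m ≤ s := by
      by_contra! hsm
      have := Nat.mul_le_mul_left r (Nat.succ_le_of_lt hsm)
      rw [Nat.mul_succ] at this
      omega
    exact (hdeg2 j hjk hj).trans_le (by exact_mod_cast hms)

theorem stmt7 (r : ℕ) (v : ℕ → LF) (m k : ℕ) (hk : k < r)
    (hΔn1 : Delta r v (r * m + k + 1) ≠ 0)
    (Ap : ℕ → Polynomial ℂ)
    (hdeg1 : ∀ j, j ≤ k → (Ap j).degree ≤ (m : WithBot ℕ))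
    (hdeg2 : ∀ j, k < j → j < r → (Ap j).degree < (m : WithBot ℕ))
    (horth : ∀ ℓ, ℓ < r * m + k →
      ∑ j ∈ Finset.range r, v j (Ap j * Polynomial.X ^ ℓ) = 0)
    (hnorm : ∑ j ∈ Finset.range r, v j (Ap j * Polynomial.X ^ (r * m + k)) = 1) :
    (Ap k).coeff m = Delta r v (r * m + k) / Delta r v (r * m + k + 1) := by
  have hr : 0 < r := by omega
  set n := r * m + k
  let A : Matrix (Fin (n + 1)) (Fin (n + 1)) ℂ := Matrix.of fun i j => momentMatrix r v i j
  let a : Fin (n + 1) → ℂ := fun c => (Ap (c % r)).coeff (c / r)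
  have hsystem : A.mulVec a = Pi.single (Fin.last n) 1 := by
    funext ℓ
    have hrow : A.mulVec a ℓ = ∑ j ∈ range r, v j (Ap j * X ^ (ℓ : ℕ)) := by
      rw [sum_apply_mul_X_pow_eq_sum_momentMatrix hr v (coeff_eq_zero_of_stepLine hdeg1 hdeg2),
        ← Fin.sum_univ_eq_sum_range]
      rfl
    rcases (Fin.le_last ℓ).lt_or_eq with hlt | rfl
    · rw [hrow, horth ℓ hlt, Pi.single_eq_of_ne hlt.ne]
    · rw [hrow, Pi.single_eq_same]
      exact hnorm
  have hlast : a (Fin.last n) = (Ap k).coeff m := by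
    simp only [a, Fin.val_last, n, Nat.mul_add_mod, Nat.mod_eq_of_lt hk, Nat.mul_add_div hr,
      Nat.div_eq_of_lt hk, add_zero]
  rw [eq_div_iff hΔn1, mul_comm, ← hlast]
  exact A.det_mul_last_eq_det_submatrix_castSucc hsystem
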